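/- arXiv:1305.2764 — 10 statements merged into one kernel-verified Lean document; each statement's English description precedes it below -/
import Mathlib

section
/- Let α be a commutative semifield that is zero-sum-free, i.e. for all x, y ∈ α, x + y = 0 implies x = 0. Then for all a, b, c ∈ α, if a + b + c = a then a + b = a. -/
/-- In a zero-sum-free commutative semifield, `a + b + c = a` implies `a + b = a`. -/
theorem semifield_quasi_identity {α : Type*} [Semifield α]
    (hzs : ∀ x y : α, x + y = 0 → x = 0) :
    ∀ a b c : α, a + b + c = a → a + b = a := by
  intro a b c h
  rcases eq_or_ne b 0 with hb | hb
  · simp [hb]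
  have ha : a ≠ 0 := by
    rintro rfl
    exact hb (hzs b c (by simpa using h))
  have ha' : a * a⁻¹ = 1 := mul_inv_cancel₀ ha
  have hb' : b * b⁻¹ = 1 := mul_inv_cancel₀ hb
  set u : α := b / a with hu
  set e : α := c / b with he
  have key : (1 : α) + u * (1 + e) = 1 := by
    have h2 : a * (1 + u * (1 + e)) = a + b + c := by
      calc a * (1 + u * (1 + e)) = a + (a * a⁻¹) * b + ((a * a⁻¹) * (b * b⁻¹)) * c := by
            rw [hu, he, div_eq_mul_inv, div_eq_mul_inv]; ring
        _ = a + b + c := by rw [ha', hb']; ring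
    exact mul_left_cancel₀ ha (by rw [h2, h, mul_one])
  have h1e : (1 : α) + e ≠ 0 := fun h0 => one_ne_zero (hzs 1 e h0)
  set w : α := (1 + e)⁻¹ with hwdef
  have hw : w * (1 + e) = 1 := inv_mul_cancel₀ h1e
  have hw' : w + w * e = 1 := by rw [← hw]; ring
  have hwu : w + u = w := by
    have h3 : w + u * (w * (1 + e)) = w * (1 + u * (1 + e)) := by ring
    rw [hw, mul_one] at h3
    rw [h3, key, mul_one]
  have h1u : (1 : α) + u = 1 := by
    calc (1 : α) + u = (w + w * e) + u := by rw [hw']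
      _ = (w + u) + w * e := by ring
      _ = w + w * e := by rw [hwu]
      _ = 1 := hw'
  calc a + b = a * (1 + u) := by
        calc a + b = a + (a * a⁻¹) * b := by rw [ha', one_mul]
          _ = a * (1 + u) := by rw [hu, div_eq_mul_inv]; ring
    _ = a * 1 := by rw [h1u]
    _ = a := mul_one a
end

section
/- Let α be a commutative semifield that is zero-sum-free, i.e. for all x, y ∈ α, x + y = 0 implies x = 0. Then the multiplicative structure of α is torsion-free: for every a ∈ α and every natural number n ≥ 1, if a ^ n = 1 then a = 1. -/
/-- The multiplicative structure of a zero-sum-free commutative semifield is torsion-free: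
`a ^ n = 1` with `n ≥ 1` implies `a = 1`. -/
theorem semifield_torsion_free {α : Type*} [Semifield α]
    (hzs : ∀ x y : α, x + y = 0 → x = 0) :
    ∀ (a : α) (n : ℕ), 1 ≤ n → a ^ n = 1 → a = 1 := by
  intro a n hn hpow
  obtain ⟨m, rfl⟩ := Nat.exists_eq_add_of_le hn
  set b : α := ∑ i ∈ Finset.range (1 + m), a ^ i with hb
  have hb' : b = (∑ i ∈ Finset.range m, a ^ (i + 1)) + 1 := by
    rw [hb, add_comm 1 m, Finset.sum_range_succ']
    simp
  have hab : a * b = b := by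
    rw [hb, Finset.mul_sum]
    have : ∀ i ∈ Finset.range (1 + m), a * a ^ i = a ^ (i + 1) := by
      intro i _; rw [pow_succ, mul_comm]
    rw [Finset.sum_congr rfl this, add_comm 1 m, Finset.sum_range_succ,
      show a ^ (m + 1) = 1 by rw [add_comm] at hpow; exact hpow, ← add_comm 1 m, ← hb', ← hb]
  have hbne : b ≠ 0 := by
    intro h
    rw [hb'] at h
    rw [add_comm] at h
    exact one_ne_zero (hzs 1 _ h)
  calc a = a * b * b⁻¹ := by rw [mul_assoc, mul_inv_cancel₀ hbne, mul_one]
    _ = b * b⁻¹ := by rw [hab]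
    _ = 1 := mul_inv_cancel₀ hbne
end

section
/- Let α be a commutative semifield, and define the natural order relation on α by a ≼ b iff a = b or there exists c ∈ α with a + c = b. Let N ⊆ α be a set of nonzero elements containing 1, closed under multiplication and multiplicative inverses, convex with respect to ≼ (if a ≼ b ≼ c with a, c ∈ N then b ∈ N), and such that every a ∈ N is comparable with 1 (a ≼ 1 or 1 ≼ a). Then N satisfies the kernel condition: for all s, t ∈ α with s + t = 1 and every a ∈ N, the element s + t·a belongs to N. -/
/-- The natural order relation on a semifield: `a ≼ b` iff `a = b` or `a + c = b` for some `c`. -/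
def NatOrder {α : Type*} [Semifield α] (a b : α) : Prop :=
  a = b ∨ ∃ c : α, a + c = b

/-- A convex normal (multiplicative) subgroup of a semifield, all of whose elements are
comparable with `1` in the natural order, satisfies the kernel condition. -/
theorem totally_ordered_subgroup_is_kernel {α : Type*} [Semifield α] (N : Set α)
    (hne : ∀ a ∈ N, a ≠ 0)
    (h1 : (1 : α) ∈ N)
    (hmul : ∀ a ∈ N, ∀ b ∈ N, a * b ∈ N)
    (hinv : ∀ a ∈ N, a⁻¹ ∈ N)
    (hconv : ∀ a ∈ N, ∀ c ∈ N, ∀ b : α, NatOrder a b → NatOrder b c → b ∈ N)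
    (hcomp : ∀ a ∈ N, NatOrder a 1 ∨ NatOrder 1 a) :
    ∀ s t : α, s + t = 1 → ∀ a ∈ N, s + t * a ∈ N := by
  intro s t hst a ha
  rcases hcomp a ha with h | h
  · -- a ≼ 1
    rcases h with rfl | ⟨c, hc⟩
    · simpa [hst] using h1
    · -- a + c = 1, so a ≼ s + t*a ≼ 1
      refine hconv a ha 1 h1 (s + t * a) ?_ ?_
      · right; refine ⟨s * c, ?_⟩
        calc a + s * c = (s + t) * a + s * c := by rw [hst, one_mul]
          _ = s * (a + c) + t * a := by ring
          _ = s + t * a := by rw [hc, mul_one]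
      · right; refine ⟨t * c, ?_⟩
        calc s + t * a + t * c = s + t * (a + c) := by ring
          _ = 1 := by rw [hc, mul_one, hst]
  · -- 1 ≼ a
    rcases h with rfl | ⟨c, hc⟩
    · simpa [hst] using h1
    · -- 1 + c = a, so 1 ≼ s + t*a ≼ a
      refine hconv 1 h1 a ha (s + t * a) ?_ ?_
      · right; refine ⟨t * c, ?_⟩
        calc (1:α) + t * c = (s + t) + t * c := by rw [hst]
          _ = s + t * (1 + c) := by ring
          _ = s + t * a := by rw [hc]
      · right; refine ⟨s * c, ?_⟩
        calc s + t * a + s * c = s * (1 + c) + t * a := by ring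
          _ = (s + t) * a := by rw [hc]; ring
          _ = a := by rw [hst, one_mul]
end

section
/- Let G be a lattice-ordered commutative group, and for a ∈ G define the principal kernel ⟨a⟩ := {x ∈ G | ∃ n ∈ ℕ, |x| ≤ |a| ^ n}, where |a| := a ⊔ a⁻¹. Then for all f, g ∈ G: (1) ⟨f⟩ ∩ ⟨g⟩ = ⟨|f| ⊓ |g|⟩, and (2) the product set ⟨f⟩·⟨g⟩ := {x·y | x ∈ ⟨f⟩, y ∈ ⟨g⟩} equals ⟨|f|·|g|⟩. In particular the intersection and product of two principal kernels are principal. -/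
/-- The principal kernel generated by `a` in a lattice-ordered commutative group:
all `x` with `|x| ≤ |a| ^ n` for some `n`, where `|a| = a ⊔ a⁻¹`. -/
def principalKernel {G : Type*} [Lattice G] [CommGroup G] (a : G) : Set G :=
  {x : G | ∃ n : ℕ, x ⊔ x⁻¹ ≤ (a ⊔ a⁻¹) ^ n}

section aux

variable {G : Type*} [Lattice G] [CommGroup G] [CovariantClass G G (· * ·) (· ≤ ·)]

lemma pk_inf_mul_le {a b c : G} (ha : 1 ≤ a) (hb : 1 ≤ b) (hc : 1 ≤ c) :
    a ⊓ (b * c) ≤ (a ⊓ b) * (a ⊓ c) := by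
  rw [mul_inf, inf_mul, inf_mul]
  refine le_inf (le_inf ?_ ?_) (le_inf ?_ ?_)
  · exact inf_le_left.trans (le_mul_of_one_le_right' ha)
  · exact inf_le_left.trans (le_mul_of_one_le_left' hb)
  · exact inf_le_left.trans (le_mul_of_one_le_right' hc)
  · exact inf_le_right

lemma pk_inf_pow_le {a b : G} (ha : 1 ≤ a) (hb : 1 ≤ b) :
    ∀ n : ℕ, a ⊓ b ^ n ≤ (a ⊓ b) ^ n := by
  intro n
  induction n with
  | zero => simp only [pow_zero]; exact inf_le_right
  | succ n ih =>
      calc a ⊓ b ^ (n + 1) = a ⊓ (b * b ^ n) := by rw [pow_succ']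
        _ ≤ (a ⊓ b) * (a ⊓ b ^ n) := pk_inf_mul_le ha hb (one_le_pow_of_one_le' hb n)
        _ ≤ (a ⊓ b) * (a ⊓ b) ^ n := mul_le_mul_right ih _
        _ = (a ⊓ b) ^ (n + 1) := (pow_succ' _ _).symm

lemma pk_pow_inf_pow_le {a b : G} (ha : 1 ≤ a) (hb : 1 ≤ b) (n : ℕ) :
    a ^ n ⊓ b ^ n ≤ (a ⊓ b) ^ (n * n) := by
  calc a ^ n ⊓ b ^ n ≤ (a ^ n ⊓ b) ^ n :=
        pk_inf_pow_le (one_le_pow_of_one_le' ha n) hb n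
    _ ≤ ((a ⊓ b) ^ n) ^ n := by
        refine pow_le_pow_left' ?_ n
        rw [inf_comm]
        calc b ⊓ a ^ n ≤ (b ⊓ a) ^ n := pk_inf_pow_le hb ha n
          _ = (a ⊓ b) ^ n := by rw [inf_comm]
    _ = (a ⊓ b) ^ (n * n) := (pow_mul _ _ _).symm

end aux

/-- The intersection of two principal kernels is the principal kernel of `|f| ⊓ |g|`, and
their product set is the principal kernel of `|f| * |g|`. -/
theorem principalKernel_inter_and_mul {G : Type*} [Lattice G] [CommGroup G]
    [CovariantClass G G (· * ·) (· ≤ ·)] (f g : G) :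
    principalKernel f ∩ principalKernel g
        = principalKernel ((f ⊔ f⁻¹) ⊓ (g ⊔ g⁻¹)) ∧
    {z : G | ∃ x ∈ principalKernel f, ∃ y ∈ principalKernel g, z = x * y}
        = principalKernel ((f ⊔ f⁻¹) * (g ⊔ g⁻¹)) := by
  set F := f ⊔ f⁻¹ with hFdef
  set Gg := g ⊔ g⁻¹ with hGdef
  have hF : 1 ≤ F := one_le_mabs f
  have hG : 1 ≤ Gg := one_le_mabs g
  have hFG : 1 ≤ F ⊓ Gg := le_inf hF hG
  have hFGm : 1 ≤ F * Gg := one_le_mul hF hG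
  have habs_inf : (F ⊓ Gg) ⊔ (F ⊓ Gg)⁻¹ = F ⊓ Gg :=
    sup_eq_left.2 ((inv_le_one'.2 hFG).trans hFG)
  have habs_mul : (F * Gg) ⊔ (F * Gg)⁻¹ = F * Gg :=
    sup_eq_left.2 ((inv_le_one'.2 hFGm).trans hFGm)
  constructor
  · ext x
    simp only [principalKernel, Set.mem_inter_iff, Set.mem_setOf_eq, habs_inf]
    constructor
    · rintro ⟨⟨m, hm⟩, ⟨n, hn⟩⟩
      refine ⟨(m + n) * (m + n), ?_⟩
      have h1 : x ⊔ x⁻¹ ≤ F ^ (m + n) :=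
        hm.trans (pow_le_pow_right' hF (Nat.le_add_right m n))
      have h2 : x ⊔ x⁻¹ ≤ Gg ^ (m + n) :=
        hn.trans (pow_le_pow_right' hG (Nat.le_add_left n m))
      exact (le_inf h1 h2).trans (pk_pow_inf_pow_le hF hG (m + n))
    · rintro ⟨n, hn⟩
      exact ⟨⟨n, hn.trans (pow_le_pow_left' inf_le_left n)⟩,
        ⟨n, hn.trans (pow_le_pow_left' inf_le_right n)⟩⟩
  · ext z
    simp only [principalKernel, Set.mem_setOf_eq, habs_mul]
    constructor
    · rintro ⟨x, ⟨m, hm⟩, y, ⟨n, hn⟩, rfl⟩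
      refine ⟨m + n, ?_⟩
      calc (x * y) ⊔ (x * y)⁻¹ ≤ (x ⊔ x⁻¹) * (y ⊔ y⁻¹) := mabs_mul_le x y
        _ ≤ F ^ m * Gg ^ n := mul_le_mul' hm hn
        _ ≤ F ^ (m + n) * Gg ^ (m + n) :=
            mul_le_mul' (pow_le_pow_right' hF (Nat.le_add_right m n))
              (pow_le_pow_right' hG (Nat.le_add_left n m))
        _ = (F * Gg) ^ (m + n) := (mul_pow _ _ _).symm
    · rintro ⟨n, hn⟩
      set a := F ^ n with hadef
      set b := Gg ^ n with hbdef
      have ha1 : 1 ≤ a := one_le_pow_of_one_le' hF n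
      have hb1 : 1 ≤ b := one_le_pow_of_one_le' hG n
      have hzab : z ≤ a * b := le_sup_left.trans (hn.trans_eq (mul_pow _ _ _))
      have hziab : z⁻¹ ≤ a * b := le_sup_right.trans (hn.trans_eq (mul_pow _ _ _))
      set x := (z ⊓ a) ⊔ a⁻¹ with hxdef
      refine ⟨x, ⟨n, ?_⟩, x⁻¹ * z, ⟨n, ?_⟩, by group⟩
      · -- |x| ≤ a = F ^ n
        have hxle : x ≤ a := sup_le (inf_le_right) ((inv_le_one'.2 ha1).trans ha1)
        have hxinv : x⁻¹ ≤ a := inv_le_of_inv_le' le_sup_right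
        exact sup_le hxle hxinv
      · -- |x⁻¹ * z| ≤ b = Gg ^ n
        have hy1 : x⁻¹ * z ≤ b := by
          have hxinv_eq : x⁻¹ = (z⁻¹ ⊔ a⁻¹) ⊓ a := by
            rw [hxdef, inv_sup, inv_inf, inv_inv]
          calc x⁻¹ * z = ((z⁻¹ ⊔ a⁻¹) ⊓ a) * z := by rw [hxinv_eq]
            _ ≤ (z⁻¹ ⊔ a⁻¹) * z := mul_le_mul_left inf_le_left _
            _ = z * z⁻¹ ⊔ z * a⁻¹ := by rw [sup_mul, mul_comm z⁻¹ z, mul_comm a⁻¹ z]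
            _ = 1 ⊔ z * a⁻¹ := by rw [mul_inv_cancel]
            _ ≤ b := by
                refine sup_le hb1 ?_
                rw [mul_inv_le_iff_le_mul]
                exact hzab.trans_eq (mul_comm a b)
        have hy2 : (x⁻¹ * z)⁻¹ ≤ b := by
          have : (x⁻¹ * z)⁻¹ = z⁻¹ * ((z ⊓ a) ⊔ a⁻¹) := by
            rw [hxdef]; group
          rw [this, mul_sup, mul_inf]
          refine sup_le (inf_le_left.trans ?_) ?_
          · rw [inv_mul_cancel]; exact hb1
          · rw [mul_inv_le_iff_le_mul]
            exact hziab.trans_eq (mul_comm a b)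
        exact sup_le hy1 hy2
end

section
/- Let G be a linearly ordered commutative group, X a set, and consider the commutative group F of all functions X → G under pointwise multiplication, ordered pointwise. Let E₁, E₂ ⊆ F be subgroups that are sublattices (closed under pointwise ⊔) and convex (if f ≤ h ≤ g pointwise with f, g ∈ Eᵢ then h ∈ Eᵢ). Then: (1) Skel(E₁·E₂) = Skel(E₁) ∩ Skel(E₂), where E₁·E₂ = {f·g | f ∈ E₁, g ∈ E₂}; and (2) Skel(E₁ ∩ E₂) = Skel(E₁) ∪ Skel(E₂). Here Skel(S) := {x ∈ X | f(x) = 1 for all f ∈ S}. -/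
/-!
Only the second identity has content. If `x` lies in neither skeleton, pick `f ∈ E₁` and
`g ∈ E₂` with `f x ≠ 1 ≠ g x`. Closure under `⊔` and inverses puts `|f|ₘ` in `E₁` and `|g|ₘ`
in `E₂`, and by convexity `|f|ₘ ⊓ |g|ₘ`, squeezed between `1` and each of them, lies in
`E₁ ∩ E₂`. Its value at `x` is `min |f x|ₘ |g x|ₘ > 1`, so `x` is not in `Skel (E₁ ∩ E₂)`.
-/

/-- The skeleton of a set `S` of functions `X → G`: the points at which all members of `S`
take the value `1`. -/
def Skel {X G : Type*} [One G] (S : Set (X → G)) : Set X :=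
  {x : X | ∀ f ∈ S, f x = 1}

open Pointwise

section Skeleton

variable {X M : Type*}

theorem skel_anti [One M] {S T : Set (X → M)} (h : S ⊆ T) : Skel T ⊆ Skel S :=
  fun _ hx f hf ↦ hx f (h hf)

theorem skel_mul [MulOneClass M] {S T : Set (X → M)} (hS : 1 ∈ S) (hT : 1 ∈ T) :
    Skel (S * T) = Skel S ∩ Skel T := by
  refine subset_antisymm (Set.subset_inter (skel_anti (Set.subset_mul_left S hT))
    (skel_anti (Set.subset_mul_right T hS))) ?_
  rintro x ⟨hxS, hxT⟩ _ ⟨f, hf, g, hg, rfl⟩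
  simp [hxS f hf, hxT g hg]

theorem skel_union_subset_inter [One M] (S T : Set (X → M)) :
    Skel S ∪ Skel T ⊆ Skel (S ∩ T) :=
  Set.union_subset (skel_anti Set.inter_subset_left) (skel_anti Set.inter_subset_right)

end Skeleton

section ConvexLatticeSubgroup

variable {X G : Type*} [CommGroup G] [LinearOrder G] {E : Subgroup (X → G)}

theorem mabs_mem_of_sup_mem (hsup : ∀ f ∈ E, ∀ g ∈ E, f ⊔ g ∈ E) {f : X → G} (hf : f ∈ E) :
    |f|ₘ ∈ E :=
  hsup f hf f⁻¹ (E.inv_mem hf)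

theorem mabs_inf_mem_of_convex [IsOrderedMonoid G] (hsup : ∀ f ∈ E, ∀ g ∈ E, f ⊔ g ∈ E)
    (hconv : ∀ f g h : X → G, f ∈ E → g ∈ E → f ≤ h → h ≤ g → h ∈ E)
    {f : X → G} (hf : f ∈ E) (g : X → G) : |f|ₘ ⊓ |g|ₘ ∈ E :=
  hconv 1 |f|ₘ _ E.one_mem (mabs_mem_of_sup_mem hsup hf)
    (le_inf (one_le_mabs f) (one_le_mabs g)) inf_le_left

theorem skel_inter [IsOrderedMonoid G] {E₁ E₂ : Subgroup (X → G)}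
    (hsup₁ : ∀ f ∈ E₁, ∀ g ∈ E₁, f ⊔ g ∈ E₁)
    (hsup₂ : ∀ f ∈ E₂, ∀ g ∈ E₂, f ⊔ g ∈ E₂)
    (hconv₁ : ∀ f g h : X → G, f ∈ E₁ → g ∈ E₁ → f ≤ h → h ≤ g → h ∈ E₁)
    (hconv₂ : ∀ f g h : X → G, f ∈ E₂ → g ∈ E₂ → f ≤ h → h ≤ g → h ∈ E₂) :
    Skel ((E₁ : Set (X → G)) ∩ E₂) = Skel (E₁ : Set (X → G)) ∪ Skel (E₂ : Set (X → G)) := by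
  refine subset_antisymm (fun x hx ↦ ?_) (skel_union_subset_inter _ _)
  by_contra hx'
  simp only [Skel, Set.mem_union, Set.mem_ofPred_eq, not_or, not_forall] at hx'
  obtain ⟨⟨f, hf, hfx⟩, ⟨g, hg, hgx⟩⟩ := hx'
  have hmem : |f|ₘ ⊓ |g|ₘ ∈ (E₁ : Set (X → G)) ∩ E₂ :=
    ⟨mabs_inf_mem_of_convex hsup₁ hconv₁ hf g,
      inf_comm |g|ₘ |f|ₘ ▸ mabs_inf_mem_of_convex hsup₂ hconv₂ hg f⟩
  exact (lt_min (one_lt_mabs.2 hfx) (one_lt_mabs.2 hgx)).ne' (hx _ hmem)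

end ConvexLatticeSubgroup

/-- For kernels `E₁, E₂` (convex subgroups closed under pointwise `⊔`) of the group of
functions from `X` to a linearly ordered commutative group:
`Skel (E₁ · E₂) = Skel E₁ ∩ Skel E₂` and `Skel (E₁ ∩ E₂) = Skel E₁ ∪ Skel E₂`. -/
theorem skel_of_mul_and_inter {G X : Type*} [CommGroup G] [LinearOrder G] [IsOrderedMonoid G]
    (E₁ E₂ : Subgroup (X → G))
    (hsup₁ : ∀ f ∈ E₁, ∀ g ∈ E₁, f ⊔ g ∈ E₁)
    (hsup₂ : ∀ f ∈ E₂, ∀ g ∈ E₂, f ⊔ g ∈ E₂)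
    (hconv₁ : ∀ f g h : X → G, f ∈ E₁ → g ∈ E₁ → f ≤ h → h ≤ g → h ∈ E₁)
    (hconv₂ : ∀ f g h : X → G, f ∈ E₂ → g ∈ E₂ → f ≤ h → h ≤ g → h ∈ E₂) :
    Skel {h : X → G | ∃ f ∈ E₁, ∃ g ∈ E₂, h = f * g}
        = Skel (E₁ : Set (X → G)) ∩ Skel (E₂ : Set (X → G)) ∧
    Skel ((E₁ : Set (X → G)) ∩ (E₂ : Set (X → G)))
        = Skel (E₁ : Set (X → G)) ∪ Skel (E₂ : Set (X → G)) := by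
  have hprod : {h : X → G | ∃ f ∈ E₁, ∃ g ∈ E₂, h = f * g} = (E₁ : Set (X → G)) * E₂ := by
    ext h
    simp only [Set.mem_ofPred_eq, Set.mem_mul, SetLike.mem_coe, eq_comm]
  rw [hprod]
  exact ⟨skel_mul E₁.one_mem E₂.one_mem, skel_inter hsup₁ hsup₂ hconv₁ hconv₂⟩
end

section
/- Let G be a linearly ordered commutative group and X a set. For V ⊆ (X → G) define the polar V^⊥ := {f : X → G | for all v ∈ V and all x ∈ X, |f(x)| ⊓ |v(x)| = 1}. Then V^⊥ is a 𝒦-kernel: for every g : X → G, if g(x) = 1 for every x ∈ X at which all f ∈ V^⊥ satisfy f(x) = 1 (i.e. Skel(V^⊥) ⊆ Skel(g)), then g ∈ V^⊥. Equivalently, Ker(Skel(V^⊥)) = V^⊥. -/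
/-- The kernel of a subset `Z` of `X`: all functions taking the value `1` on `Z`. -/
def Ker {X G : Type*} [One G] (Z : Set X) : Set (X → G) :=
  {f : X → G | ∀ a ∈ Z, f a = 1}

/-- The polar of a set `V` of functions: all `f` with `|f| ⊓ |v| = 1` pointwise for
every `v ∈ V`, where `|a| = a ⊔ a⁻¹`. -/
def polar {X G : Type*} [Lattice G] [Group G] (V : Set (X → G)) : Set (X → G) :=
  {f : X → G | ∀ v ∈ V, ∀ x : X, (f x ⊔ (f x)⁻¹) ⊓ (v x ⊔ (v x)⁻¹) = 1}

theorem subset_Ker_Skel {X G : Type*} [One G] (S : Set (X → G)) : S ⊆ Ker (Skel S) :=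
  fun _ hf _ hx => hx _ hf

section LinearOrder

variable {G : Type*} [Group G] [LinearOrder G] [MulLeftMono G] [MulRightMono G]

theorem mabs_inf_mabs_eq_one {a b : G} : |a|ₘ ⊓ |b|ₘ = 1 ↔ a = 1 ∨ b = 1 := by
  rw [← (le_inf (one_le_mabs a) (one_le_mabs b)).ge_iff_eq', inf_le_iff, mabs_le_one,
    mabs_le_one]

variable {X : Type*} {V : Set (X → G)}

theorem mem_polar_iff {f : X → G} : f ∈ polar V ↔ ∀ v ∈ V, ∀ x, f x = 1 ∨ v x = 1 :=
  forall₂_congr fun _ _ => forall_congr' fun _ => mabs_inf_mabs_eq_one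

theorem mem_Skel_polar_of_ne_one {v : X → G} (hv : v ∈ V) {x : X} (hvx : v x ≠ 1) :
    x ∈ Skel (polar V) :=
  fun _ hf => (mem_polar_iff.1 hf v hv x).resolve_right hvx

end LinearOrder

/-- A polar is a 𝒦-kernel: `Ker (Skel (V^⊥)) = V^⊥`. -/
theorem polar_is_K_kernel {G X : Type*} [CommGroup G] [LinearOrder G] [IsOrderedMonoid G]
    (V : Set (X → G)) :
    Ker (Skel (polar V)) = polar V := by
  refine Set.Subset.antisymm (fun g hg => ?_) (subset_Ker_Skel _)
  rw [mem_polar_iff]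
  intro v hv x
  exact or_iff_not_imp_right.2 fun hvx => hg x (mem_Skel_polar_of_ne_one hv hvx)
end

section
/- Let G be a linearly ordered commutative group, X a set, and f₁, …, f_k : X → G finitely many functions (k ≥ 1). Let f(x) := f₁(x) ⊔ … ⊔ f_k(x) (pointwise maximum) and f̃(x) := |f₁(x)| ⊓ … ⊓ |f_k(x)| (pointwise minimum of absolute values, where |a| := a ⊔ a⁻¹). Then Skel(f) = Skel(f̃) if and only if for every index i and every x ∈ X, f_i(x) = 1 implies f_j(x) ≤ 1 for all indices j. -/
/-!
Since `1 ≤ |a|ₘ` with equality iff `a = 1`, the minimum of the `|fᵢ x|ₘ` is `1` exactly when some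
`fᵢ x = 1`, whereas the maximum of the `fᵢ x` is `1` exactly when moreover every `fⱼ x ≤ 1`.
-/

namespace Finset

variable {ι α : Type*} {s : Finset ι} {f : ι → α}

theorem sup'_eq_iff [LinearOrder α] (H : s.Nonempty) {a : α} :
    s.sup' H f = a ↔ (∀ i ∈ s, f i ≤ a) ∧ ∃ i ∈ s, f i = a := by
  constructor
  · rintro rfl
    obtain ⟨i, hi, hmax⟩ := exists_mem_eq_sup' H f
    exact ⟨fun j hj => le_sup' f hj, i, hi, hmax.symm⟩
  · rintro ⟨hle, i, hi, rfl⟩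
    exact le_antisymm (sup'_le H f hle) (le_sup' f hi)

theorem inf'_eq_iff [LinearOrder α] (H : s.Nonempty) {a : α} :
    s.inf' H f = a ↔ (∀ i ∈ s, a ≤ f i) ∧ ∃ i ∈ s, f i = a :=
  sup'_eq_iff (α := αᵒᵈ) H

theorem inf'_mabs_eq_one_iff [CommGroup α] [LinearOrder α] [IsOrderedMonoid α]
    (H : s.Nonempty) : s.inf' H (fun i => |f i|ₘ) = 1 ↔ ∃ i ∈ s, f i = 1 := by
  simp only [inf'_eq_iff, one_le_mabs, implies_true, mabs_eq_one, true_and]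

end Finset

/-- For a finite nonempty family `f i : X → G` of functions to a linearly ordered
commutative group, the skeleton of the pointwise maximum `⊔ᵢ fᵢ` equals the skeleton of
the pointwise minimum `⊓ᵢ |fᵢ|` (with `|a| = a ⊔ a⁻¹`) if and only if whenever some
`fᵢ(x) = 1`, all `fⱼ(x) ≤ 1`. -/
theorem skel_sup_eq_skel_inf_abs_iff {G X : Type*} [CommGroup G] [LinearOrder G] [IsOrderedMonoid G]
    {ι : Type*} [Fintype ι] [Nonempty ι] (f : ι → X → G) :
    ({x : X | (Finset.univ.sup' Finset.univ_nonempty fun i => f i x) = 1}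
        = {x : X | (Finset.univ.inf' Finset.univ_nonempty fun i => f i x ⊔ (f i x)⁻¹) = 1})
      ↔ ∀ (i : ι) (x : X), f i x = 1 → ∀ j : ι, f j x ≤ 1 := by
  have hinf (x : X) : (Finset.univ.inf' Finset.univ_nonempty fun i => f i x ⊔ (f i x)⁻¹) = 1 ↔
      ∃ i, f i x = 1 :=
    (Finset.inf'_mabs_eq_one_iff Finset.univ_nonempty).trans (by simp)
  simp only [Set.ext_iff, Set.mem_ofPred_eq, Finset.sup'_eq_iff, hinf, Finset.mem_univ, true_imp_iff,
    true_and, and_iff_right_iff_imp, forall_exists_index]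
  exact forall_comm
end

section
/- Let G be a linearly ordered commutative group, X a set, k ≥ 2, and f₁, …, f_k : X → G (the monomial functions of a supertropical polynomial, repeated entries representing ghost monomials). Define f̂(x) := max over i of ( f_i(x) · ( max over j ≠ i of f_j(x) )⁻¹ ). Then for every x ∈ X, f̂(x) = 1 if and only if x is a corner root of the family f₁, …, f_k, i.e. there exist indices i ≠ j with f_i(x) = f_j(x) and f_l(x) ≤ f_i(x) for all l. -/
/-! `f̂(x) ≥ 1` always, the term of a maximal `fᵢ(x)` being at least `1`. Hence `f̂(x) = 1` iff every
`fᵢ(x)` is at most the maximum of the other values, and this happens iff the maximum of the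
`fⱼ(x)` is attained at two different indices. -/

namespace Finset

theorem sup'_mul_inv_eq_one_iff {ι G : Type*} [CommGroup G] [LinearOrder G] [IsOrderedMonoid G]
    {s : Finset ι} (hs : s.Nonempty) (a b : ι → G) (hab : ∃ i ∈ s, b i ≤ a i) :
    s.sup' hs (fun i => a i * (b i)⁻¹) = 1 ↔ ∀ i ∈ s, a i ≤ b i := by
  obtain ⟨i, hi, hba⟩ := hab
  have one_le : 1 ≤ s.sup' hs (fun i => a i * (b i)⁻¹) :=
    le_sup'_of_le _ hi (le_mul_inv_iff_le.mpr hba)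
  rw [le_antisymm_iff, sup'_le_iff]
  simp only [mul_inv_le_one_iff_le, one_le, and_true]

section LinearOrder

variable {ι α : Type*} [DecidableEq ι] [LinearOrder α] {s : Finset ι}

theorem le_sup'_erase_of_eq_of_ne {g : ι → α} {i j : ι} (hi : i ∈ s) (hj : j ∈ s) (hij : i ≠ j)
    (heq : g i = g j) (l : ι) (hne : (s.erase l).Nonempty) : g i ≤ (s.erase l).sup' hne g := by
  rcases eq_or_ne l i with rfl | hli
  · exact le_sup'_of_le g (mem_erase.mpr ⟨hij.symm, hj⟩) heq.le
  · exact le_sup' g (mem_erase.mpr ⟨hli.symm, hi⟩)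

theorem forall_le_sup'_erase_iff (g : ι → α) (hs : s.Nonempty)
    (hne : ∀ i ∈ s, (s.erase i).Nonempty) :
    (∀ i (hi : i ∈ s), g i ≤ (s.erase i).sup' (hne i hi) g) ↔
      ∃ i ∈ s, ∃ j ∈ s, i ≠ j ∧ g i = g j ∧ ∀ l ∈ s, g l ≤ g i := by
  constructor
  · intro h
    obtain ⟨i, hi, hmax⟩ := exists_max_image s g hs
    obtain ⟨j, hj, hsup⟩ := exists_mem_eq_sup' (hne i hi) g
    obtain ⟨hji, hj⟩ := mem_erase.mp hj
    exact ⟨i, hi, j, hj, hji.symm, le_antisymm (hsup ▸ h i hi) (hmax j hj), hmax⟩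
  · rintro ⟨i, hi, j, hj, hij, heq, hmax⟩ l hl
    exact (hmax l hl).trans (le_sup'_erase_of_eq_of_ne hi hj hij heq l (hne l hl))

end LinearOrder

end Finset

open Finset in
/-- For a finite family of at least two functions `f i : X → G` (the monomials of a
supertropical polynomial), the rational function
`f̂(x) = ⊔ᵢ ( fᵢ(x) · (⊔_{j ≠ i} fⱼ(x))⁻¹ )` takes the value `1` at `x` iff `x` is a
corner root of the family: there are `i ≠ j` with `fᵢ(x) = fⱼ(x)` dominating all `fₗ(x)`. -/
theorem hat_eq_one_iff_corner_root {G X : Type*} [CommGroup G] [LinearOrder G] [IsOrderedMonoid G]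
    {ι : Type*} [Fintype ι] [DecidableEq ι] (hcard : 2 ≤ Fintype.card ι)
    (f : ι → X → G) (x : X) :
    (Finset.univ.sup'
        (Finset.card_pos.mp (by rw [Finset.card_univ]; omega))
        (fun i => f i x *
          ((Finset.univ.erase i).sup'
            (Finset.card_pos.mp (by
              rw [Finset.card_erase_of_mem (Finset.mem_univ i), Finset.card_univ]; omega))
            (fun j => f j x))⁻¹)) = 1
      ↔ ∃ i j : ι, i ≠ j ∧ f i x = f j x ∧ ∀ l : ι, f l x ≤ f i x := by
  have hs : (univ : Finset ι).Nonempty := card_pos.mp (by rw [card_univ]; omega)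
  have hne : ∀ i ∈ (univ : Finset ι), (univ.erase i).Nonempty := fun i hi =>
    card_pos.mp (by rw [card_erase_of_mem hi, card_univ]; omega)
  obtain ⟨i₀, -, hmax⟩ := exists_max_image univ (f · x) hs
  have hdom : (univ.erase i₀).sup' (hne i₀ (mem_univ i₀)) (f · x) ≤ f i₀ x :=
    sup'_le _ _ fun j _ => hmax j (mem_univ j)
  rw [sup'_mul_inv_eq_one_iff _ _ _ ⟨i₀, mem_univ i₀, hdom⟩]
  simpa only [mem_univ, true_and, forall_true_left] using forall_le_sup'_erase_iff (f · x) hs hne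
end

section
/- Let G be a linearly ordered commutative group and X a set. Let f : ι → (X → G) and g : κ → (X → G) be families of functions indexed by finite nonempty types ι and κ. Then the corner locus of the product family (indexed by ι × κ, sending (i, j) to the pointwise product f_i · g_j) equals Cor(f) ∪ Cor(g), the union of the corner loci of the two families. (Together with the trivial identity Cor(f) ∩ Cor(g) = Cor of the disjoint-union family, this shows finite unions and intersections of finitely generated corner loci are finitely generated corner loci.) -/
/-!
A point is a corner root of a family exactly when the maximum of the family there is attained
at least twice. By cancellativity, the pairs maximizing `fᵢ gⱼ` are exactly the pairs of a
maximizer of `f` and a maximizer of `g`; both sets of maximizers are nonempty by finiteness, and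
a product of two nonempty sets has two elements iff one of its factors does.
-/

/-- `x` is a corner root of the family `f` if two distinct members agree at `x` and
dominate all other members there. -/
def IsCornerRoot {X A ι : Type*} [LinearOrder A] (f : ι → X → A) (x : X) : Prop :=
  ∃ i j : ι, i ≠ j ∧ f i x = f j x ∧ ∀ l : ι, f l x ≤ f i x

theorem Set.nontrivial_prod_iff_of_nonempty {α β : Type*} {s : Set α} {t : Set β}
    (hs : s.Nonempty) (ht : t.Nonempty) :
    (s ×ˢ t).Nontrivial ↔ s.Nontrivial ∨ t.Nontrivial := by
  constructor
  · rintro ⟨⟨a, b⟩, ⟨ha, hb⟩, ⟨c, d⟩, ⟨hc, hd⟩, hne⟩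
    by_cases hac : a = c
    · subst hac
      exact Or.inr ⟨b, hb, d, hd, fun hbd => hne (by rw [hbd])⟩
    · exact Or.inl ⟨a, ha, c, hc, hac⟩
  · rintro (⟨a, ha, c, hc, hac⟩ | ⟨b, hb, d, hd, hbd⟩)
    · obtain ⟨b, hb⟩ := ht
      exact ⟨(a, b), ⟨ha, hb⟩, (c, b), ⟨hc, hb⟩, by simpa using hac⟩
    · obtain ⟨a, ha⟩ := hs
      exact ⟨(a, b), ⟨ha, hb⟩, (a, d), ⟨ha, hd⟩, by simpa using hbd⟩

section

variable {ι κ A : Type*} [LinearOrder A]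

def maximizers (u : ι → A) : Set ι := {i | ∀ l, u l ≤ u i}

theorem maximizers_nonempty [Finite ι] [Nonempty ι] (u : ι → A) : (maximizers u).Nonempty :=
  Finite.exists_max u

theorem isCornerRoot_iff_maximizers_nontrivial {X : Type*} (f : ι → X → A) (x : X) :
    IsCornerRoot f x ↔ (maximizers (f · x)).Nontrivial := by
  constructor
  · rintro ⟨i, j, hij, hfij, hmax⟩
    exact ⟨i, hmax, j, fun l => (hmax l).trans_eq hfij, hij⟩
  · rintro ⟨i, hi, j, hj, hij⟩
    exact ⟨i, j, hij, le_antisymm (hj i) (hi j), hi⟩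

theorem maximizers_mul [CommMonoid A] [IsOrderedCancelMonoid A] (u : ι → A) (v : κ → A) :
    maximizers (fun p : ι × κ => u p.1 * v p.2) = maximizers u ×ˢ maximizers v := by
  ext ⟨i, j⟩
  constructor
  · intro h
    exact ⟨fun l => le_of_mul_le_mul_right' (h (l, j)),
      fun m => le_of_mul_le_mul_left' (h (i, m))⟩
  · rintro ⟨hi, hj⟩ ⟨l, m⟩
    exact mul_le_mul' (hi l) (hj m)

end

/-- The corner locus of the product family `{fᵢ · gⱼ}` is the union of the corner loci of
the two families. -/
theorem corner_locus_of_product_family {A X : Type*} [CommGroup A] [LinearOrder A] [IsOrderedMonoid A]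
    {ι κ : Type*} [Fintype ι] [Nonempty ι] [Fintype κ] [Nonempty κ]
    (f : ι → X → A) (g : κ → X → A) :
    {x : X | IsCornerRoot (fun p : ι × κ => fun y => f p.1 y * g p.2 y) x}
      = {x : X | IsCornerRoot f x} ∪ {x : X | IsCornerRoot g x} := by
  ext x
  simp only [Set.mem_ofPred_eq, Set.mem_union, isCornerRoot_iff_maximizers_nontrivial]
  rw [maximizers_mul (f · x) (g · x)]
  exact Set.nontrivial_prod_iff_of_nonempty (maximizers_nonempty _) (maximizers_nonempty _)
end

section
/- Let G be a linearly ordered commutative group and X a set. Let f : ι → (X → G) and g : κ → (X → G) be families of functions indexed by finite nonempty types, and write F(x) := max_i f_i(x) and H(x) := max_j g_j(x). Then the corner locus of the combined family (indexed by the disjoint union ι ⊕ κ) decomposes as: Cor(f ⊕ g) = {x | F(x) = H(x)} ∪ ( Cor(f) ∩ {x | H(x) ≤ F(x)} ) ∪ ( Cor(g) ∩ {x | F(x) ≤ H(x)} ). -/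
/-- The pointwise maximum of a finite nonempty family of functions. -/
def famSup {A X ι : Type*} [SemilatticeSup A] [Fintype ι] [Nonempty ι]
    (f : ι → X → A) (x : X) : A :=
  Finset.univ.sup' Finset.univ_nonempty fun i => f i x

/-!
At a point `x`, the maximum of the combined family is `F ⊔ H`, and a corner root is a pair of
distinct indices both attaining that maximum. Split according to which families the two indices
come from: one index from each family forces `F = F ⊔ H = H`, while two indices from `f` say
that `x` is a corner root of `f` at which `F` attains `F ⊔ H`, i.e. `H ≤ F` (symmetrically for `g`).
-/

section famSup

variable {A X ι κ : Type*} [LinearOrder A] [Fintype ι] [Nonempty ι] [Fintype κ] [Nonempty κ]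

lemma le_famSup (f : ι → X → A) (x : X) (i : ι) : f i x ≤ famSup f x :=
  Finset.le_sup' (fun i => f i x) (Finset.mem_univ i)

lemma famSup_le_iff {f : ι → X → A} {x : X} {a : A} : famSup f x ≤ a ↔ ∀ i, f i x ≤ a := by
  simp [famSup, Finset.sup'_le_iff]

lemma exists_eq_famSup (f : ι → X → A) (x : X) : ∃ i, f i x = famSup f x := by
  obtain ⟨i, -, hi⟩ := Finset.exists_mem_eq_sup' Finset.univ_nonempty fun i => f i x
  exact ⟨i, hi.symm⟩

lemma eq_famSup_iff {f : ι → X → A} {x : X} {i : ι} :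
    f i x = famSup f x ↔ ∀ l, f l x ≤ f i x :=
  ⟨fun h l => h ▸ le_famSup f x l, fun h => le_antisymm (le_famSup f x i) (famSup_le_iff.2 h)⟩

lemma eq_famSup_sup_iff {f : ι → X → A} {x : X} {i : ι} {c : A} :
    f i x = famSup f x ⊔ c ↔ f i x = famSup f x ∧ c ≤ famSup f x := by
  constructor
  · intro h
    have hc : c ≤ famSup f x := left_eq_sup.1 (le_antisymm le_sup_left (h ▸ le_famSup f x i))
    exact ⟨h.trans (sup_eq_left.2 hc), hc⟩
  · rintro ⟨h, hc⟩
    rw [sup_eq_left.2 hc, h]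

lemma famSup_sum_elim (f : ι → X → A) (g : κ → X → A) (x : X) :
    famSup (Sum.elim f g) x = famSup f x ⊔ famSup g x := by
  refine le_antisymm (famSup_le_iff.2 ?_) (sup_le (famSup_le_iff.2 fun i => ?_) ?_)
  · rintro (i | j)
    · exact le_sup_of_le_left (le_famSup f x i)
    · exact le_sup_of_le_right (le_famSup g x j)
  · exact le_famSup (Sum.elim f g) x (Sum.inl i)
  · exact famSup_le_iff.2 fun j => le_famSup (Sum.elim f g) x (Sum.inr j)

lemma isCornerRoot_iff_exists_ne_eq_famSup {f : ι → X → A} {x : X} :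
    IsCornerRoot f x ↔ ∃ i j, i ≠ j ∧ f i x = famSup f x ∧ f j x = famSup f x := by
  constructor
  · rintro ⟨i, j, hij, heq, hdom⟩
    have hi : f i x = famSup f x := eq_famSup_iff.2 hdom
    exact ⟨i, j, hij, hi, heq.symm.trans hi⟩
  · rintro ⟨i, j, hij, hi, hj⟩
    exact ⟨i, j, hij, hi.trans hj.symm, eq_famSup_iff.1 hi⟩

lemma exists_ne_eq_famSup_sup_iff {f : ι → X → A} {x : X} {c : A} :
    (∃ i j, i ≠ j ∧ f i x = famSup f x ⊔ c ∧ f j x = famSup f x ⊔ c) ↔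
      IsCornerRoot f x ∧ c ≤ famSup f x := by
  simp only [eq_famSup_sup_iff, isCornerRoot_iff_exists_ne_eq_famSup]
  constructor
  · rintro ⟨i, j, hij, ⟨hi, hc⟩, hj, -⟩
    exact ⟨⟨i, j, hij, hi, hj⟩, hc⟩
  · rintro ⟨⟨i, j, hij, hi, hj⟩, hc⟩
    exact ⟨i, j, hij, ⟨hi, hc⟩, hj, hc⟩

lemma exists_eq_famSup_sup_famSup_iff {f : ι → X → A} {g : κ → X → A} {x : X} :
    (∃ i j, f i x = famSup f x ⊔ famSup g x ∧ g j x = famSup f x ⊔ famSup g x) ↔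
      famSup f x = famSup g x := by
  constructor
  · rintro ⟨i, j, hi, hj⟩
    rw [sup_comm] at hj
    exact le_antisymm (eq_famSup_sup_iff.1 hj).2 (eq_famSup_sup_iff.1 hi).2
  · intro h
    obtain ⟨i, hi⟩ := exists_eq_famSup f x
    obtain ⟨j, hj⟩ := exists_eq_famSup g x
    exact ⟨i, j, by rw [hi, h, sup_idem], by rw [hj, h, sup_idem]⟩

lemma isCornerRoot_sum_elim_iff {f : ι → X → A} {g : κ → X → A} {x : X} :
    IsCornerRoot (Sum.elim f g) x ↔
      (∃ i j, f i x = famSup f x ⊔ famSup g x ∧ g j x = famSup f x ⊔ famSup g x) ∨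
      (∃ i j, i ≠ j ∧ f i x = famSup f x ⊔ famSup g x ∧ f j x = famSup f x ⊔ famSup g x) ∨
      (∃ i j, i ≠ j ∧ g i x = famSup g x ⊔ famSup f x ∧ g j x = famSup g x ⊔ famSup f x) := by
  rw [isCornerRoot_iff_exists_ne_eq_famSup, famSup_sum_elim, sup_comm (famSup g x)]
  set M := famSup f x ⊔ famSup g x
  have hswap : (∃ j i, g j x = M ∧ f i x = M) ↔ ∃ i j, f i x = M ∧ g j x = M :=
    ⟨fun ⟨j, i, hj, hi⟩ => ⟨i, j, hi, hj⟩, fun ⟨i, j, hi, hj⟩ => ⟨j, i, hj, hi⟩⟩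
  simp only [Sum.exists, Sum.elim_inl, Sum.elim_inr, ne_eq, Sum.inl.injEq, Sum.inr.injEq,
    reduceCtorEq, not_false_eq_true, true_and, exists_or, hswap, or_assoc, or_self_left]
  exact or_left_comm

end famSup

theorem corner_locus_sum_decomposition_general {A X : Type*} [LinearOrder A]
    {ι κ : Type*} [Fintype ι] [Nonempty ι] [Fintype κ] [Nonempty κ]
    (f : ι → X → A) (g : κ → X → A) :
    {x : X | IsCornerRoot (Sum.elim f g) x}
      = {x : X | famSup f x = famSup g x}
        ∪ ({x : X | IsCornerRoot f x} ∩ {x : X | famSup g x ≤ famSup f x})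
        ∪ ({x : X | IsCornerRoot g x} ∩ {x : X | famSup f x ≤ famSup g x}) := by
  ext x
  simp only [Set.mem_ofPred_eq, Set.mem_union, Set.mem_inter_iff, isCornerRoot_sum_elim_iff,
    exists_eq_famSup_sup_famSup_iff, exists_ne_eq_famSup_sup_iff, or_assoc]

/-- Decomposition of the corner locus of the combined family (numerator `f` and
denominator `g` of a rational function): it is the skeleton `{F = H}` together with the
corner roots of `f` where `H ≤ F` and the corner roots of `g` where `F ≤ H`. -/
theorem corner_locus_sum_decomposition {A X : Type*} [CommGroup A] [LinearOrder A] [IsOrderedMonoid A]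
    {ι κ : Type*} [Fintype ι] [Nonempty ι] [Fintype κ] [Nonempty κ]
    (f : ι → X → A) (g : κ → X → A) :
    {x : X | IsCornerRoot (Sum.elim f g) x}
      = {x : X | famSup f x = famSup g x}
        ∪ ({x : X | IsCornerRoot f x} ∩ {x : X | famSup g x ≤ famSup f x})
        ∪ ({x : X | IsCornerRoot g x} ∩ {x : X | famSup f x ≤ famSup g x}) :=
  corner_locus_sum_decomposition_general f g
end
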